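/- Let O be a point of the plane, r > 0, u and w orthonormal vectors, and s > 0. If the four points O − (s/2)·u, O + (s/2)·u, O + (s/2)·u + s·w, O − (s/2)·u + s·w form a square of side s whose two upper vertices lie on the circle of center O and radius r (i.e. dist O (O + (s/2)·u + s·w) = r), then s = 2r/√5; equivalently s² = (2r)·(2r/5), so the side of the largest square inscribed in a semicircle is the geometric mean of the diameter and its fifth part. -/

import Mathlib

/-!
By Pythagoras, `r² = (s/2)² + s² = 5s²/4`; taking the nonnegative square root gives `s = 2r/√5`.
-/

open scoped RealInnerProductSpace

theorem norm_smul_add_smul_sq_of_orthonormal {E : Type*} [NormedAddCommGroup E]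
    [InnerProductSpace ℝ E] {u w : E} (hu : ‖u‖ = 1) (hw : ‖w‖ = 1) (huw : ⟪u, w⟫ = 0)
    (a b : ℝ) : ‖a • u + b • w‖ ^ 2 = a ^ 2 + b ^ 2 := by
  rw [norm_add_sq_real, inner_smul_left, inner_smul_right, huw, norm_smul, norm_smul, hu, hw,
    Real.norm_eq_abs, Real.norm_eq_abs]
  simp

theorem eq_two_mul_div_sqrt_five_of_five_mul_sq {s r : ℝ} (hs : 0 ≤ s) (hr : 0 ≤ r)
    (h : 5 * s ^ 2 = 4 * r ^ 2) : s = 2 * r / Real.sqrt 5 := by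
  have hsqrt5 : 0 < Real.sqrt 5 := by positivity
  rw [eq_div_iff hsqrt5.ne']
  refine (pow_left_inj₀ (by positivity) (by positivity) two_ne_zero).mp ?_
  rw [mul_pow, Real.sq_sqrt (by norm_num)]
  linarith

theorem mohr_II_prop14_square_in_semicircle_general (O u w : EuclideanSpace ℝ (Fin 2))
    (r s : ℝ) (hs : 0 < s)
    (hu : ‖u‖ = 1) (hw : ‖w‖ = 1) (huw : ⟪u, w⟫ = 0)
    (hvertex : dist O (O + (s / 2) • u + s • w) = r) :
    s = 2 * r / Real.sqrt 5 ∧ s ^ 2 = (2 * r) * (2 * r / 5) := by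
  rw [add_assoc, dist_self_add_right] at hvertex
  have hr_sq : r ^ 2 = (s / 2) ^ 2 + s ^ 2 := by
    rw [← hvertex, norm_smul_add_smul_sq_of_orthonormal hu hw huw]
  have h_five : 5 * s ^ 2 = 4 * r ^ 2 := by linarith
  refine ⟨eq_two_mul_div_sqrt_five_of_five_mul_sq hs.le (hvertex ▸ norm_nonneg _) h_five, ?_⟩
  linarith

/-- Mohr, *Euclides Danicus*, Second Part, Proposition 14: if the square with vertices
`O − (s/2)·u`, `O + (s/2)·u`, `O + (s/2)·u + s·w`, `O − (s/2)·u + s·w` (of side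
`s > 0`, base centered at the center `O` of a semicircle of radius `r`) has its upper
vertices on the circle of center `O` and radius `r`, then `s = 2r/√5`; equivalently
`s² = (2r)·(2r/5)`: the side of the largest square inscribed in a semicircle is the
geometric mean of the diameter and its fifth part. -/
theorem mohr_II_prop14_square_in_semicircle (O u w : EuclideanSpace ℝ (Fin 2))
    (r s : ℝ) (hr : 0 < r) (hs : 0 < s)
    (hu : ‖u‖ = 1) (hw : ‖w‖ = 1) (huw : ⟪u, w⟫ = 0)
    (hvertex : dist O (O + (s / 2) • u + s • w) = r) :
    s = 2 * r / Real.sqrt 5 ∧ s ^ 2 = (2 * r) * (2 * r / 5) :=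
  mohr_II_prop14_square_in_semicircle_general O u w r s hs hu hw huw hvertex
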